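/- arXiv:1512.02016 — 2 statements merged into one kernel-verified Lean document; each statement's English description precedes it below -/
import Mathlib

section
/- Let y ∈ {−1, 1}, let c > 0, and let ℓ, ω be real numbers. Then exp(−2c·max(0, ℓ − yω)) = (2π)^{−1/2} e^{−cℓ} · ∫₀^∞ λ^{−1/2} · exp(−(λ + c²ℓ²/λ)/2) · exp(κ(λ)·ω − ρ(λ)·ω²/2) dλ, where κ(λ) = cy(1 + cℓ/λ) and ρ(λ) = c²/λ, and the integral is over λ ∈ (0, ∞) with respect to Lebesgue measure. -/
/-!
Substituting `λ = t²` turns the kernel `λ^{-1/2} exp(-(λ + b²/λ)/2) dλ` into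
`2 e^{-|b|} exp(-(t - |b|/t)²/2) dt`. For `a > 0` the map `t ↦ t - a/t` is a bijection of `(0, ∞)`
onto `ℝ` with Jacobian `1 + a/t²`, and `t ↦ a/t` turns `dt` into `a/t² dt` while negating `t - a/t`;
so for even integrable `F` (Cauchy–Schlömilch) `∫₀^∞ F(t - a/t) dt = ½ ∫ F`. With `F` the standard
Gaussian this gives `∫₀^∞ φ = √(2π) e^{-|b|}`. For `b = c(ℓ - yω)` and `y² = 1` the integrand of the
theorem is `e^{cyω} φ(λ)`, and `-cℓ + cyω - c|ℓ - yω| = -2c(ℓ - yω)₊`.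
-/

open MeasureTheory Real Set

section CauchySchlomilch

variable {E : Type*} [NormedAddCommGroup E] [NormedSpace ℝ E] {a : ℝ}

lemma hasDerivAt_const_div {t : ℝ} (ht : t ≠ 0) :
    HasDerivAt (fun t : ℝ => a / t) (-(a / t ^ 2)) t := by
  simpa [div_eq_mul_inv, neg_div] using (hasDerivAt_inv ht).const_mul a

lemma hasDerivAt_sub_const_div {t : ℝ} (ht : t ≠ 0) :
    HasDerivAt (fun t : ℝ => t - a / t) (1 + a / t ^ 2) t :=
  ((hasDerivAt_id' t).sub (hasDerivAt_const_div ht)).congr_deriv (sub_neg_eq_add 1 _)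

lemma image_const_div_Ioi_zero (ha : 0 < a) : (a / ·) '' Ioi (0 : ℝ) = Ioi 0 := by
  ext u
  refine ⟨?_, fun hu => ⟨a / u, div_pos ha hu, div_div_cancel₀ ha.ne'⟩⟩
  rintro ⟨t, ht, rfl⟩
  exact div_pos ha ht

lemma strictAntiOn_const_div_Ioi_zero (ha : 0 < a) : StrictAntiOn (a / ·) (Ioi (0 : ℝ)) :=
  fun _ hs _ _ hst => div_lt_div_of_pos_left ha hs hst

lemma strictMonoOn_sub_const_div_Ioi_zero (ha : 0 ≤ a) :
    StrictMonoOn (fun t : ℝ => t - a / t) (Ioi 0) := fun s hs _ _ hst => by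
  linarith [div_le_div_of_nonneg_left ha hs hst.le]

lemma image_sub_const_div_Ioi_zero (ha : 0 < a) :
    (fun t : ℝ => t - a / t) '' Ioi 0 = univ := by
  refine eq_univ_of_forall fun u => ?_
  -- the positive root of `t ^ 2 - u * t - a = 0`
  set s := √(u ^ 2 + 4 * a)
  have hs : s ^ 2 = u ^ 2 + 4 * a := sq_sqrt (by positivity)
  have hus : |u| < s := by
    rw [← sqrt_sq_eq_abs]
    exact sqrt_lt_sqrt (sq_nonneg u) (by linarith)
  have hpos : 0 < u + s := by linarith [neg_abs_le u]
  refine ⟨(u + s) / 2, half_pos hpos, ?_⟩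
  have hne : u + s ≠ 0 := hpos.ne'
  field_simp
  linear_combination hs

theorem integral_Ioi_comp_const_div (G : ℝ → E) (ha : 0 < a) :
    ∫ t in Ioi 0, (a / t ^ 2) • G (a / t) = ∫ t in Ioi 0, G t := by
  conv_rhs => rw [← image_const_div_Ioi_zero ha]
  rw [integral_image_eq_integral_abs_deriv_smul measurableSet_Ioi
    (fun t ht => (hasDerivAt_const_div (ne_of_gt ht)).hasDerivWithinAt)
    (strictAntiOn_const_div_Ioi_zero ha).injOn]
  refine setIntegral_congr_fun measurableSet_Ioi fun t ht => ?_
  rw [abs_neg, abs_of_pos (div_pos ha (pow_pos ht 2))]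

theorem integral_Ioi_comp_sub_const_div (F : ℝ → E) (ha : 0 < a) :
    ∫ t in Ioi 0, (1 + a / t ^ 2) • F (t - a / t) = ∫ u, F u := by
  have := integral_image_eq_integral_abs_deriv_smul measurableSet_Ioi
    (fun t ht => (hasDerivAt_sub_const_div (ne_of_gt ht)).hasDerivWithinAt)
    (strictMonoOn_sub_const_div_Ioi_zero ha.le).injOn F
  rw [image_sub_const_div_Ioi_zero ha, setIntegral_univ] at this
  rw [this]
  refine setIntegral_congr_fun measurableSet_Ioi fun t ht => ?_
  rw [abs_of_pos (by positivity)]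

theorem integrableOn_Ioi_comp_sub_const_div {F : ℝ → E} (hF : Integrable F) (ha : 0 < a) :
    IntegrableOn (fun t => (1 + a / t ^ 2) • F (t - a / t)) (Ioi 0) := by
  have := integrableOn_image_iff_integrableOn_abs_deriv_smul measurableSet_Ioi
    (fun t ht => (hasDerivAt_sub_const_div (ne_of_gt ht)).hasDerivWithinAt)
    (strictMonoOn_sub_const_div_Ioi_zero ha.le).injOn F
  rw [image_sub_const_div_Ioi_zero ha, integrableOn_univ] at this
  refine (this.1 hF).congr_fun (fun t ht => ?_) measurableSet_Ioi
  simp only [abs_of_pos (show 0 < 1 + a / t ^ 2 by positivity)]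

theorem integral_Ioi_of_even {F : ℝ → E} (hF : Integrable F) (heven : F.Even) :
    ∫ t in Ioi 0, F t = (2 : ℝ)⁻¹ • ∫ u, F u := by
  have hIic : ∫ t in Iic 0, F t = ∫ t in Ioi 0, F t := by
    simpa only [neg_zero, show ∀ t, F (-t) = F t from heven]
      using (integral_comp_neg_Ioi 0 F).symm
  rw [← intervalIntegral.integral_Iic_add_Ioi hF.integrableOn hF.integrableOn, hIic,
    ← two_smul ℝ, smul_smul, inv_mul_cancel₀ two_ne_zero, one_smul]

theorem integral_Ioi_comp_sub_const_div_of_even {F : ℝ → E} (hF : Integrable F) (heven : F.Even)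
    (ha : 0 ≤ a) : ∫ t in Ioi 0, F (t - a / t) = (2 : ℝ)⁻¹ • ∫ u, F u := by
  rcases ha.eq_or_lt with rfl | ha
  · simpa only [zero_div, sub_zero] using integral_Ioi_of_even hF heven
  have hh := integrableOn_Ioi_comp_sub_const_div hF ha
  have hFg : IntegrableOn (fun t => F (t - a / t)) (Ioi 0) := by
    have hcont : Continuous fun t : ℝ => t ^ 2 / (t ^ 2 + a) :=
      (continuous_pow 2).div (by fun_prop) fun t => by positivity
    have hbound : ∀ t : ℝ, ‖t ^ 2 / (t ^ 2 + a)‖ ≤ 1 := fun t => by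
      rw [norm_div, Real.norm_of_nonneg (sq_nonneg t), Real.norm_of_nonneg (by positivity)]
      exact div_le_one_of_le₀ (by linarith) (by positivity)
    refine IntegrableOn.congr_fun (hh.bdd_smul 1 hcont.aestronglyMeasurable (ae_of_all _ hbound))
      (fun t ht => ?_) measurableSet_Ioi
    have ht0 : t ≠ 0 := ne_of_gt ht
    have hden : t ^ 2 + a ≠ 0 := by positivity
    simp only [Pi.smul_apply', smul_smul]
    rw [div_mul_eq_mul_div, show t ^ 2 * (1 + a / t ^ 2) = t ^ 2 + a by field_simp, div_self hden,
      one_smul]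
  -- `t ↦ a / t` swaps `t - a / t` and its negative
  have hsymm : ∫ t in Ioi 0, (a / t ^ 2) • F (t - a / t) = ∫ t in Ioi 0, F (t - a / t) := by
    conv_rhs => rw [← integral_Ioi_comp_const_div (fun t => F (t - a / t)) ha]
    refine setIntegral_congr_fun measurableSet_Ioi fun t ht => ?_
    rw [div_div_cancel₀ ha.ne', ← heven, neg_sub]
  have hsplit : ∫ t in Ioi 0, (1 + a / t ^ 2) • F (t - a / t)
      = (∫ t in Ioi 0, F (t - a / t)) + ∫ t in Ioi 0, (a / t ^ 2) • F (t - a / t) := by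
    have hrest : IntegrableOn (fun t => (a / t ^ 2) • F (t - a / t)) (Ioi 0) :=
      (hh.sub hFg).congr_fun (fun t _ => by simp [add_smul]) measurableSet_Ioi
    simp_rw [add_smul, one_smul]
    exact integral_add hFg hrest
  rw [← integral_Ioi_comp_sub_const_div F ha, hsplit, hsymm, ← two_smul ℝ, smul_smul,
    inv_mul_cancel₀ two_ne_zero, one_smul]

end CauchySchlomilch

/-- Unnormalized density of the generalized inverse Gaussian law with parameters `(1/2, 1, b²)`. -/
noncomputable def gigKernel (b l : ℝ) : ℝ := l ^ (-(1 : ℝ) / 2) * exp (-(l + b ^ 2 / l) / 2)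

lemma exp_neg_sq_div_two_eq (u : ℝ) : exp (-u ^ 2 / 2) = exp (-(1 / 2) * u ^ 2) := by
  ring_nf

lemma integrable_exp_neg_sq_div_two : Integrable fun u : ℝ => exp (-u ^ 2 / 2) := by
  simpa only [exp_neg_sq_div_two_eq] using integrable_exp_neg_mul_sq one_half_pos

lemma integral_exp_neg_sq_div_two : ∫ u : ℝ, exp (-u ^ 2 / 2) = √(2 * π) := by
  simp_rw [exp_neg_sq_div_two_eq, integral_gaussian, div_div_eq_mul_div, div_one, mul_comm]

lemma gigKernel_sq_mul {b t : ℝ} (ht : 0 < t) :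
    2 * t * gigKernel b (t ^ 2) = 2 * exp (-|b|) * exp (-(t - |b| / t) ^ 2 / 2) := by
  have hpow : (t ^ 2) ^ (-(1 : ℝ) / 2) = t⁻¹ := by
    rw [← rpow_natCast, ← rpow_mul ht.le]
    norm_num [rpow_neg_one]
  have hexp : -(t ^ 2 + b ^ 2 / t ^ 2) / 2 = -|b| + -(t - |b| / t) ^ 2 / 2 := by
    rw [← sq_abs b]
    field_simp
    ring
  rw [gigKernel, hpow, hexp, exp_add]
  field_simp

theorem integral_gigKernel (b : ℝ) : ∫ l in Ioi 0, gigKernel b l = √(2 * π) * exp (-|b|) := by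
  rw [← integral_comp_rpow_Ioi_of_pos two_pos]
  have hsub : ∀ t ∈ Ioi (0 : ℝ), (2 * t ^ ((2 : ℝ) - 1)) • gigKernel b (t ^ (2 : ℝ))
      = 2 * exp (-|b|) * exp (-(t - |b| / t) ^ 2 / 2) := fun t ht => by
    rw [rpow_two, show (2 : ℝ) - 1 = 1 by norm_num, rpow_one, smul_eq_mul]
    exact gigKernel_sq_mul ht
  rw [setIntegral_congr_fun measurableSet_Ioi hsub, integral_const_mul,
    integral_Ioi_comp_sub_const_div_of_even integrable_exp_neg_sq_div_two (fun u => by simp)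
      (abs_nonneg b), integral_exp_neg_sq_div_two, smul_eq_mul]
  ring

lemma neg_sub_abs_eq_neg_two_mul_max (x : ℝ) : -x - |x| = -2 * max 0 x := by
  rcases le_total 0 x with hx | hx
  · rw [abs_of_nonneg hx, max_eq_right hx]; ring
  · rw [abs_of_nonpos hx, max_eq_left hx]; ring

lemma hinge_integrand_eq {y c ℓ ω l : ℝ} (hy : y ^ 2 = 1) (hl : l ≠ 0) :
    l ^ (-(1 : ℝ) / 2) * exp (-(l + c ^ 2 * ℓ ^ 2 / l) / 2) *
        exp (c * y * (1 + c * ℓ / l) * ω - c ^ 2 / l * ω ^ 2 / 2) =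
      exp (c * y * ω) * gigKernel (c * (ℓ - y * ω)) l := by
  rw [gigKernel, mul_left_comm, mul_assoc, ← exp_add, ← exp_add]
  congr 2
  field_simp
  linear_combination (c ^ 2 * ω ^ 2) * hy

/-- Hinge-loss case of Lemma 1: the pseudo-likelihood `φ₂(y|ω) = exp(-2c(ℓ - yω)₊)`
equals `(2π)^{-1/2} e^{-cℓ}` times the integral over `λ ∈ (0,∞)` of the generalized
inverse Gaussian kernel `λ^{-1/2} exp(-(λ + c²ℓ²/λ)/2)` times `exp(κ(λ)ω - ρ(λ)ω²/2)`,
where `κ(λ) = cy(1 + cℓ/λ)` and `ρ(λ) = c²/λ`. -/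
theorem hinge_pseudolikelihood_mixture (y c ℓ ω : ℝ) (hy : y = 1 ∨ y = -1) (hc : 0 < c) :
    Real.exp (-2 * c * max 0 (ℓ - y * ω)) =
      (2 * Real.pi) ^ (-(1 : ℝ) / 2) * Real.exp (-(c * ℓ)) *
        ∫ l in Set.Ioi (0 : ℝ),
          l ^ (-(1 : ℝ) / 2) * Real.exp (-(l + c ^ 2 * ℓ ^ 2 / l) / 2) *
            Real.exp (c * y * (1 + c * ℓ / l) * ω - c ^ 2 / l * ω ^ 2 / 2) := by
  have hy2 : y ^ 2 = 1 := by rcases hy with rfl | rfl <;> norm_num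
  have hnorm : (2 * π) ^ (-(1 : ℝ) / 2) * √(2 * π) = 1 := by
    rw [sqrt_eq_rpow, ← rpow_add (by positivity)]
    norm_num
  rw [setIntegral_congr_fun measurableSet_Ioi fun l hl => hinge_integrand_eq hy2 (ne_of_gt hl),
    integral_const_mul, integral_gigKernel, abs_mul, abs_of_pos hc]
  have hexponent : -2 * c * max 0 (ℓ - y * ω) = -(c * ℓ) + c * y * ω + -(c * |ℓ - y * ω|) := by
    linear_combination (-c) * neg_sub_abs_eq_neg_two_mul_max (ℓ - y * ω)
  rw [hexponent, exp_add, exp_add]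
  linear_combination (-(exp (-(c * ℓ)) * exp (c * y * ω) * exp (-(c * |ℓ - y * ω|)))) * hnorm
end

section
/- Let c > 0, let (g_d)_{d≥1} be an i.i.d. sequence of random variables each with the Gamma distribution with shape c and rate 1, and let X = (1/(2π²)) Σ_{d=1}^{∞} g_d/((d − 1/2)²). Then for every ỹ ∈ {0, 1} and every real number ω: e^{cỹω}/(1 + e^{ω})^{c} = 2^{−c} · e^{κω} · E[exp(−X ω²/2)], where κ = c(ỹ − 1/2). -/
/-!
The terms of the Polya-Gamma series are independent Gamma variables, so the Laplace transform of
a partial sum is the product of the factors `(1 + (ω/2π)² / (d + 1/2)²)^(-c)`. The series has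
finite mean, hence converges a.e., and dominated convergence (the integrands are bounded by 1)
gives `E[exp(-X ω²/2)] = ∏_d (1 + (ω/2π)² / (d + 1/2)²)^(-c) = cosh (ω/2) ^ (-c)` by Euler's
product for `cosh`. That product comes from Euler's sine product through
`sinh (2y) = 2 sinh y cosh y`, splitting the product for `sinh (2πy)` into even and odd factors.
Finally `1 + e^ω = 2 cosh (ω/2) e^(ω/2)` turns `cosh (ω/2) ^ (-c)` into the logistic likelihood.
-/

open MeasureTheory Real ProbabilityTheory Filter Topology

theorem Finset.prod_range_two_mul {M : Type*} [CommMonoid M] (f : ℕ → M) (n : ℕ) :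
    ∏ i ∈ range (2 * n), f i = (∏ k ∈ range n, f (2 * k)) * ∏ k ∈ range n, f (2 * k + 1) := by
  induction n with
  | zero => simp
  | succ n ih =>
    rw [Nat.mul_succ, prod_range_succ, prod_range_succ, ih, prod_range_succ, prod_range_succ]
    ac_rfl

namespace Real

theorem tendsto_euler_sinh_prod (x : ℝ) :
    Tendsto (fun n : ℕ => π * x * ∏ j ∈ Finset.range n, (1 + x ^ 2 / ((j : ℝ) + 1) ^ 2))
      atTop (𝓝 (sinh (π * x))) := by
  have h := (Complex.continuous_im.tendsto _).comp (Complex.tendsto_euler_sin_prod (x * Complex.I))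
  convert h using 1
  · ext1 n
    have : π * (x * Complex.I) *
          ∏ j ∈ Finset.range n, (1 - (x * Complex.I) ^ 2 / ((j : ℂ) + 1) ^ 2) =
        ((π * x * ∏ j ∈ Finset.range n, (1 + x ^ 2 / ((j : ℝ) + 1) ^ 2) : ℝ) : ℂ) * Complex.I := by
      push_cast
      simp only [mul_pow, Complex.I_sq]
      ring_nf
    rw [Function.comp_apply, this, Complex.mul_I_im, Complex.ofReal_re]
  · rw [← mul_assoc, ← Complex.ofReal_mul, Complex.sin_mul_I, Complex.mul_I_im,
      Complex.sinh_ofReal_re]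

theorem tendsto_euler_sinh_prod' {x : ℝ} (hx : x ≠ 0) :
    Tendsto (fun n : ℕ => ∏ j ∈ Finset.range n, (1 + x ^ 2 / ((j : ℝ) + 1) ^ 2))
      atTop (𝓝 (sinh (π * x) / (π * x))) :=
  ((tendsto_euler_sinh_prod x).div_const (π * x)).congr fun n => by
    field_simp [pi_ne_zero, hx]

theorem tendsto_euler_cosh_prod (x : ℝ) :
    Tendsto (fun n : ℕ => ∏ k ∈ Finset.range n, (1 + x ^ 2 / ((k : ℝ) + 1 / 2) ^ 2))
      atTop (𝓝 (cosh (π * x))) := by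
  rcases eq_or_ne x 0 with rfl | hx
  · simp
  have h2x : 2 * x ≠ 0 := mul_ne_zero two_ne_zero hx
  have hsinh : sinh (π * x) / (π * x) ≠ 0 :=
    div_ne_zero (sinh_ne_zero.mpr (mul_ne_zero pi_ne_zero hx)) (mul_ne_zero pi_ne_zero hx)
  have h := ((tendsto_euler_sinh_prod' h2x).comp (tendsto_id.const_mul_atTop' two_pos)).div
    (tendsto_euler_sinh_prod' hx) hsinh
  convert h using 1
  · ext1 n
    have hpos : 0 < ∏ j ∈ Finset.range n, (1 + x ^ 2 / ((j : ℝ) + 1) ^ 2) :=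
      Finset.prod_pos fun j _ => by positivity
    dsimp only [Pi.div_apply, Function.comp_apply, id]
    have heven (k : ℕ) : 1 + (2 * x) ^ 2 / (((2 * k : ℕ) : ℝ) + 1) ^ 2 =
        1 + x ^ 2 / ((k : ℝ) + 1 / 2) ^ 2 := by
      push_cast; field_simp
    have hodd (k : ℕ) : 1 + (2 * x) ^ 2 / (((2 * k + 1 : ℕ) : ℝ) + 1) ^ 2 =
        1 + x ^ 2 / ((k : ℝ) + 1) ^ 2 := by
      push_cast; field_simp; ring
    simp_rw [Finset.prod_range_two_mul, heven, hodd, mul_div_cancel_right₀ _ hpos.ne']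
  · rw [mul_left_comm, sinh_two_mul]
    field_simp [pi_ne_zero, hx, sinh_ne_zero.mpr (mul_ne_zero pi_ne_zero hx)]

theorem exp_mul_div_one_add_exp_rpow (c y ω : ℝ) :
    exp (c * y * ω) / (1 + exp ω) ^ c =
      2 ^ (-c) * exp (c * (y - 1 / 2) * ω) * cosh (ω / 2) ^ (-c) := by
  have hsplit : 1 + exp ω = 2 * cosh (ω / 2) * exp (ω / 2) := by
    have hsq : exp ω = exp (ω / 2) * exp (ω / 2) := by rw [← exp_add, add_halves]
    have hone : exp (-(ω / 2)) * exp (ω / 2) = 1 := by rw [← exp_add, neg_add_cancel, exp_zero]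
    rw [cosh_eq, hsq]
    linear_combination -hone
  have hexp : exp (c * (y - 1 / 2) * ω) = exp (c * y * ω) / exp (ω / 2) ^ c := by
    rw [← exp_mul, ← exp_sub]
    ring_nf
  rw [hsplit, mul_rpow (by positivity) (exp_pos _).le, mul_rpow zero_le_two (cosh_pos _).le,
    rpow_neg zero_le_two, rpow_neg (cosh_pos _).le, hexp]
  field_simp

end Real

section GammaDistribution

variable {a r s : ℝ}

lemma ae_nonneg_gammaMeasure (a r : ℝ) : ∀ᵐ x ∂gammaMeasure a r, 0 ≤ x := by
  simp only [ae_iff, not_le]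
  change gammaMeasure a r (Set.Iio 0) = 0
  rw [gammaMeasure, withDensity_apply _ measurableSet_Iio]
  exact lintegral_gammaPDF_of_nonpos le_rfl

lemma lintegral_gammaMeasure_eq_of_mul_gammaPDF {a' r' : ℝ} {h : ℝ → ENNReal} {K : ENNReal}
    (hh : Measurable h) (ha' : 0 < a') (hr' : 0 < r')
    (H : ∀ x, gammaPDF a r x * h x = K * gammaPDF a' r' x) :
    ∫⁻ x, h x ∂gammaMeasure a r = K := by
  have hpdf (a r : ℝ) : Measurable (gammaPDF a r) := (measurable_gammaPDFReal a r).ennreal_ofReal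
  rw [gammaMeasure, lintegral_withDensity_eq_lintegral_mul _ (hpdf a r) hh]
  simp_rw [Pi.mul_apply, H]
  rw [lintegral_const_mul _ (hpdf a' r'), lintegral_gammaPDF_eq_one ha' hr', mul_one]

lemma gammaPDFReal_mul_exp_neg_mul (hr : 0 < r) (hrs : 0 < r + s) (x : ℝ) :
    gammaPDFReal a r x * exp (-(s * x)) = (r / (r + s)) ^ a * gammaPDFReal a (r + s) x := by
  unfold gammaPDFReal
  split_ifs
  · have hexp : exp (-(r * x)) * exp (-(s * x)) = exp (-((r + s) * x)) := by
      rw [← exp_add]; ring_nf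
    rw [div_rpow hr.le hrs.le, ← hexp]
    field_simp [(rpow_pos_of_pos hrs a).ne']
  · simp

lemma integral_exp_neg_mul_gammaMeasure (ha : 0 < a) (hr : 0 < r) (hrs : 0 < r + s) :
    ∫ x, exp (-(s * x)) ∂gammaMeasure a r = (r / (r + s)) ^ a := by
  have hK : 0 ≤ (r / (r + s)) ^ a := by positivity
  rw [integral_eq_lintegral_of_nonneg_ae (ae_of_all _ fun _ => (exp_pos _).le) (by fun_prop),
    lintegral_gammaMeasure_eq_of_mul_gammaPDF (by fun_prop) ha hrs fun x => ?_,
    ENNReal.toReal_ofReal hK]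
  rw [gammaPDF, gammaPDF, ← ENNReal.ofReal_mul (gammaPDFReal_nonneg ha hr x),
    ← ENNReal.ofReal_mul hK, gammaPDFReal_mul_exp_neg_mul hr hrs]

lemma gammaPDFReal_mul_self (ha : 0 < a) (hr : 0 < r) (x : ℝ) :
    gammaPDFReal a r x * x = a / r * gammaPDFReal (a + 1) r x := by
  unfold gammaPDFReal
  split_ifs with hx
  · have hpow : x ^ (a + 1 - 1) = x ^ (a - 1) * x := by
      rw [add_sub_cancel_right, ← rpow_add_one' hx (by simpa using ha.ne'), sub_add_cancel]
    rw [hpow, rpow_add_one hr.ne', Gamma_add_one ha.ne']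
    field_simp [(Gamma_pos_of_pos ha).ne']
  · simp

lemma lintegral_enorm_gammaMeasure (ha : 0 < a) (hr : 0 < r) :
    ∫⁻ x, ‖x‖ₑ ∂gammaMeasure a r = ENNReal.ofReal (a / r) :=
  lintegral_gammaMeasure_eq_of_mul_gammaPDF (a' := a + 1) (by fun_prop) (by linarith) hr
    fun x => by
      rcases lt_or_ge x 0 with hx | hx
      · simp [gammaPDF_of_neg hx]
      · rw [enorm_of_nonneg hx, gammaPDF, gammaPDF,
          ← ENNReal.ofReal_mul (gammaPDFReal_nonneg ha hr x), ← ENNReal.ofReal_mul (by positivity),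
          gammaPDFReal_mul_self ha hr]

variable {Ω : Type*} [MeasurableSpace Ω] {P : Measure Ω} {Y : Ω → ℝ}

lemma aemeasurable_of_map_eq_gammaMeasure (ha : 0 < a) (hr : 0 < r)
    (hY : P.map Y = gammaMeasure a r) : AEMeasurable Y P :=
  .of_map_ne_zero <| hY ▸ (isProbabilityMeasure_gammaMeasure ha hr).ne_zero

lemma integral_exp_neg_mul_of_map_eq_gammaMeasure (ha : 0 < a) (hr : 0 < r) (hrs : 0 < r + s)
    (hY : P.map Y = gammaMeasure a r) :
    ∫ w, exp (-(s * Y w)) ∂P = (r / (r + s)) ^ a := by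
  rw [← integral_map (f := fun y => exp (-(s * y)))
    (aemeasurable_of_map_eq_gammaMeasure ha hr hY) (by fun_prop), hY,
    integral_exp_neg_mul_gammaMeasure ha hr hrs]

end GammaDistribution

section IndependentSeries

variable {Ω : Type*} [MeasurableSpace Ω] {μ : Measure Ω}

lemma ae_summable_of_tsum_lintegral_enorm_ne_top {ι : Type*} [Countable ι] {f : ι → Ω → ℝ}
    (hf : ∀ i, AEMeasurable (f i) μ) (h : ∑' i, ∫⁻ w, ‖f i w‖ₑ ∂μ ≠ ⊤) :
    ∀ᵐ w ∂μ, Summable fun i => f i w :=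
  (summable_norm_of_tsum_eLpNorm_ne_top le_rfl (fun i => (hf i).aestronglyMeasurable)
    (by simpa only [eLpNorm_one_eq_lintegral_enorm] using h)).mono fun _ h => h.of_norm

lemma ae_summable_mul_of_map_eq_gammaMeasure {a r : ℝ} (ha : 0 < a) (hr : 0 < r)
    {g : ℕ → Ω → ℝ} (hdist : ∀ d, μ.map (g d) = gammaMeasure a r) {t : ℕ → ℝ}
    (ht : Summable t) : ∀ᵐ w ∂μ, Summable fun d => t d * g d w := by
  have hg (d : ℕ) := aemeasurable_of_map_eq_gammaMeasure ha hr (hdist d)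
  refine ae_summable_of_tsum_lintegral_enorm_ne_top (fun d => (hg d).const_mul _) ?_
  have hmean (d : ℕ) : ∫⁻ w, ‖t d * g d w‖ₑ ∂μ = ‖t d‖ₑ * ENNReal.ofReal (a / r) := by
    simp_rw [enorm_mul]
    rw [lintegral_const_mul' _ _ enorm_ne_top, ← lintegral_map' (by fun_prop) (hg d), hdist d,
      lintegral_enorm_gammaMeasure ha hr]
  simp_rw [hmean]
  rw [ENNReal.tsum_mul_right]
  exact ENNReal.mul_ne_top (tsum_enorm_ne_top_iff_summable_norm.mpr ht.norm) ENNReal.ofReal_ne_top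

lemma tendsto_prod_integral_exp_neg_of_iIndepFun {f : ℕ → Ω → ℝ}
    (hf : ∀ i, AEMeasurable (f i) μ) (hindep : iIndepFun f μ) (hnn : ∀ i, 0 ≤ᵐ[μ] f i)
    (hsum : ∀ᵐ w ∂μ, Summable fun i => f i w) :
    Tendsto (fun n => ∏ i ∈ Finset.range n, ∫ w, exp (-f i w) ∂μ) atTop
      (𝓝 (∫ w, exp (-∑' i, f i w) ∂μ)) := by
  have := hindep.isProbabilityMeasure
  have hprod (n : ℕ) : ∏ i ∈ Finset.range n, ∫ w, exp (-f i w) ∂μ =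
      ∫ w, exp (-∑ i ∈ Finset.range n, f i w) ∂μ := by
    have h := hindep.mgf_sum₀ hf (Finset.range n) (t := -1)
    simp only [mgf, Finset.sum_apply, neg_one_mul] at h
    exact h.symm
  simp_rw [hprod]
  refine tendsto_integral_of_dominated_convergence (fun _ => 1)
    (fun n => (Finset.aemeasurable_fun_sum _ fun i _ => hf i).neg.exp.aestronglyMeasurable)
    (integrable_const 1) (fun n => ?_) ?_
  · filter_upwards [ae_all_iff.mpr hnn] with w hw
    rw [norm_of_nonneg (exp_pos _).le, exp_le_one_iff, neg_nonpos]
    exact Finset.sum_nonneg fun i _ => hw i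
  · filter_upwards [hsum] with w hw
    exact (continuous_exp.tendsto _).comp hw.hasSum.tendsto_sum_nat.neg

end IndependentSeries

theorem integral_exp_neg_polyaGamma_mul_sq {Ω : Type*} [MeasurableSpace Ω] {P : Measure Ω}
    {c : ℝ} (hc : 0 < c) {g : ℕ → Ω → ℝ} (hindep : iIndepFun g P)
    (hdist : ∀ d, P.map (g d) = gammaMeasure c 1) {X : Ω → ℝ}
    (hX : ∀ w, X w = 1 / (2 * π ^ 2) * ∑' d : ℕ, g d w / ((d : ℝ) + 1 / 2) ^ 2) (ω : ℝ) :
    ∫ w, exp (-X w * ω ^ 2 / 2) ∂P = cosh (ω / 2) ^ (-c) := by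
  have hg (d : ℕ) := aemeasurable_of_map_eq_gammaMeasure hc one_pos (hdist d)
  set x := ω / (2 * π)
  set t : ℕ → ℝ := fun d => x ^ 2 / ((d : ℝ) + 1 / 2) ^ 2 with ht
  have ht_nonneg (d : ℕ) : 0 ≤ t d := by positivity
  have hXt (w : Ω) : -X w * ω ^ 2 / 2 = -∑' d, t d * g d w := by
    rw [hX, neg_mul, neg_div, ← tsum_mul_left, ← tsum_mul_right, ← tsum_div_const]
    congr 2 with d
    simp only [ht, x]
    field_simp
  have ht_summable : Summable t :=
    ((summable_one_div_nat_add_rpow (1 / 2) 2).mpr one_lt_two).mul_left (x ^ 2) |>.congr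
      fun d => by rw [rpow_two, sq_abs, ht, mul_one_div]
  have hfactor (d : ℕ) : ∫ w, exp (-(t d * g d w)) ∂P = (1 + t d) ^ (-c) := by
    have h1t : 0 < 1 + t d := by linarith [ht_nonneg d]
    rw [integral_exp_neg_mul_of_map_eq_gammaMeasure hc one_pos h1t (hdist d), one_div,
      inv_rpow h1t.le, rpow_neg h1t.le]
  have hlim := tendsto_prod_integral_exp_neg_of_iIndepFun (fun d => (hg d).const_mul (t d))
    (hindep.comp₀ (fun d y => t d * y) hg fun d => by fun_prop)
    (fun d => (ae_of_ae_map (p := (0 ≤ ·)) (hg d) (hdist d ▸ ae_nonneg_gammaMeasure c 1)).mono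
      fun w hw => mul_nonneg (ht_nonneg d) hw)
    (ae_summable_mul_of_map_eq_gammaMeasure hc one_pos hdist ht_summable)
  simp only [hfactor] at hlim
  simp_rw [hXt]
  refine tendsto_nhds_unique hlim ?_
  have hx : π * x = ω / 2 := by
    simp only [x]
    field_simp
  rw [← hx]
  refine ((tendsto_euler_cosh_prod x).rpow_const (.inl (cosh_pos _).ne')).congr fun n => ?_
  rw [← finsetProd_rpow _ _ fun d _ => by positivity]

theorem logistic_pseudolikelihood_mixture_general {Ω : Type*} [MeasurableSpace Ω]
    (P : Measure Ω)
    (c : ℝ) (hc : 0 < c) (g : ℕ → Ω → ℝ)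
    (hindep : iIndepFun g P)
    (hdist : ∀ d, P.map (g d) = gammaMeasure c 1)
    (X : Ω → ℝ)
    (hX : ∀ w, X w = 1 / (2 * Real.pi ^ 2) * ∑' d : ℕ, g d w / ((d : ℝ) + 1 / 2) ^ 2)
    (ytil : ℝ) (ω : ℝ) :
    Real.exp (c * ytil * ω) / (1 + Real.exp ω) ^ c =
      (2 : ℝ) ^ (-c) * Real.exp (c * (ytil - 1 / 2) * ω) *
        ∫ w, Real.exp (-X w * ω ^ 2 / 2) ∂P := by
  rw [integral_exp_neg_polyaGamma_mul_sq hc hindep hdist hX, exp_mul_div_one_add_exp_rpow]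

/-- Logistic-loss case of Lemma 1: with `X` the Polya-Gamma PG(c, 0) random variable
`X = (1/(2π²)) Σ_{d≥1} g_d/(d - 1/2)²` (indexed here by `d : ℕ`, term `g d/(d + 1/2)²`),
where `(g_d)` are i.i.d. Gamma(c, 1), for every `ỹ ∈ {0, 1}` and real `ω`:
`e^{cỹω}/(1 + e^{ω})^c = 2^{-c} · e^{κω} · E[exp(-X ω²/2)]` with `κ = c(ỹ - 1/2)`. -/
theorem logistic_pseudolikelihood_mixture {Ω : Type*} [MeasurableSpace Ω]
    (P : Measure Ω) [IsProbabilityMeasure P]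
    (c : ℝ) (hc : 0 < c) (g : ℕ → Ω → ℝ)
    (hmeas : ∀ d, Measurable (g d))
    (hindep : iIndepFun g P)
    (hdist : ∀ d, P.map (g d) = gammaMeasure c 1)
    (X : Ω → ℝ)
    (hX : ∀ w, X w = 1 / (2 * Real.pi ^ 2) * ∑' d : ℕ, g d w / ((d : ℝ) + 1 / 2) ^ 2)
    (ytil : ℝ) (hy : ytil = 0 ∨ ytil = 1) (ω : ℝ) :
    Real.exp (c * ytil * ω) / (1 + Real.exp ω) ^ c =
      (2 : ℝ) ^ (-c) * Real.exp (c * (ytil - 1 / 2) * ω) *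
        ∫ w, Real.exp (-X w * ω ^ 2 / 2) ∂P :=
  logistic_pseudolikelihood_mixture_general P c hc g hindep hdist X hX ytil ω
end
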